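/- Let V be an anti-torqued vector field on hyperbolic space H^n (n ≥ 3) with conformal scalar f and dual 1-form ν. Then dν = 0 and the gradient of f satisfies ∇f = (1 − f²) V. -/

import Mathlib

noncomputable section

namespace HyperboloidModel

variable {n : ℕ}

/-- The underlying space `ℝ^(n+1)_1` of Lorentz–Minkowski geometry. -/
abbrev E (n : ℕ) := Fin (n + 1) → ℝ

/-- The Lorentz–Minkowski metric `⟨v,w⟩ = −v_1 w_1 + ∑_{i≥2} v_i w_i`. -/
def mink (v w : E n) : ℝ := (∑ i, v i * w i) - 2 * (v 0 * w 0)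

/-- Hyperbolic space `H^n`: the upper sheet of the hyperboloid `⟨P,P⟩ = −1`. -/
def H (n : ℕ) : Set (E n) := {p | mink p p = -1 ∧ 0 < p 0}

/-- The induced Levi-Civita connection of `H^n`:
`∇_X Y = dY(X) − ⟨X,Y⟩ Φ` (Gauss formula), `Φ` the position vector. -/
def hypbConn (X Y : E n → E n) (p : E n) : E n :=
  fderiv ℝ Y p (X p) - mink (X p) (Y p) • p

/-! ### Bilinearity of `mink` -/

lemma mink_symm (v w : E n) : mink v w = mink w v := by
  unfold mink
  rw [Finset.sum_congr rfl (fun i _ => mul_comm (v i) (w i))]; ring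

lemma mink_add_left (u v w : E n) : mink (u + v) w = mink u w + mink v w := by
  unfold mink; simp [add_mul, Finset.sum_add_distrib]; ring

lemma mink_smul_left (c : ℝ) (v w : E n) : mink (c • v) w = c * mink v w := by
  unfold mink; simp [mul_assoc, ← Finset.mul_sum]; ring

lemma mink_add_right (u v w : E n) : mink u (v + w) = mink u v + mink u w := by
  rw [mink_symm, mink_add_left, mink_symm v u, mink_symm w u]

lemma mink_smul_right (c : ℝ) (v w : E n) : mink v (c • w) = c * mink v w := by
  rw [mink_symm, mink_smul_left, mink_symm]

lemma mink_neg_left (v w : E n) : mink (-v) w = -mink v w := by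
  have := mink_smul_left (-1) v w; simpa using this

lemma mink_neg_right (v w : E n) : mink v (-w) = -mink v w := by
  rw [mink_symm, mink_neg_left, mink_symm]

lemma mink_sub_left (u v w : E n) : mink (u - v) w = mink u w - mink v w := by
  have := mink_add_left (u - v) v w
  rw [sub_add_cancel] at this; linarith

lemma mink_sub_right (u v w : E n) : mink u (v - w) = mink u v - mink u w := by
  rw [mink_symm, mink_sub_left, mink_symm v u, mink_symm w u]

@[simp] lemma mink_zero_left (w : E n) : mink 0 w = 0 := by
  have := mink_smul_left 0 0 w; simpa using this

@[simp] lemma mink_zero_right (w : E n) : mink w 0 = 0 := by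
  rw [mink_symm]; simp

/-- `mink` as a continuous bilinear map. -/
def minkCLM : E n →L[ℝ] E n →L[ℝ] ℝ :=
  LinearMap.toContinuousLinearMap
  { toFun := fun v => LinearMap.toContinuousLinearMap
      { toFun := fun w => mink v w
        map_add' := fun a b => mink_add_right v a b
        map_smul' := fun c a => mink_smul_right c v a }
    map_add' := by intro a b; ext w; simp [mink_add_left]
    map_smul' := by intro c a; ext w; simp [mink_smul_left] }

@[simp] lemma minkCLM_apply (v w : E n) : minkCLM v w = mink v w := rfl

/-- Derivative of `q ↦ mink (A q) (B q)`. -/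
lemma hasFDerivAt_mink {A B : E n → E n} {A' B' : E n →L[ℝ] E n} {p : E n}
    (hA : HasFDerivAt A A' p) (hB : HasFDerivAt B B' p) :
    HasFDerivAt (fun q => mink (A q) (B q))
      ((minkCLM (A p)).comp B' + ((minkCLM : E n →L[ℝ] E n →L[ℝ] ℝ).comp A').flip (B p)) p := by
  have hc : HasFDerivAt (fun q => minkCLM (A q))
      ((minkCLM : E n →L[ℝ] E n →L[ℝ] ℝ).comp A') p :=
    (minkCLM.hasFDerivAt.comp p hA)
  exact hc.clm_apply hB

/-! ### The tangent extension field `X_v(q) = v + ⟨v,q⟩ q` -/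

def tExt (v : E n) : E n → E n := fun q => v + mink v q • q

lemma tExt_contDiff (v : E n) : ContDiff ℝ (⊤ : ℕ∞) (tExt v) := by
  have h1 : ContDiff ℝ (⊤ : ℕ∞) (fun q : E n => mink v q) := by
    have : (fun q : E n => mink v q) = fun q => minkCLM v q := rfl
    rw [this]; exact (minkCLM v).contDiff
  exact contDiff_const.add (h1.smul contDiff_id)

lemma tExt_tangent (v : E n) (p : E n) (hp : p ∈ H n) : mink (tExt v p) p = 0 := by
  unfold tExt
  rw [mink_add_left, mink_smul_left, hp.1]; ring

lemma tExt_apply_self (v p : E n) (hv : mink v p = 0) : tExt v p = v := by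
  unfold tExt; rw [hv]; simp

lemma hasFDerivAt_tExt (v p : E n) :
    HasFDerivAt (tExt v)
      (((minkCLM v).smulRight p) + (mink v p) • (ContinuousLinearMap.id ℝ (E n))) p := by
  have h1 : HasFDerivAt (fun q : E n => mink v q • q)
      (((minkCLM v).smulRight p) + (mink v p) • (ContinuousLinearMap.id ℝ (E n))) p := by
    have := (HasFDerivAt.smul (c := fun q : E n => mink v q) (f := fun q : E n => q)
      (c' := (minkCLM v : E n →L[ℝ] ℝ)) (f' := ContinuousLinearMap.id ℝ (E n)) (x := p)
      ((minkCLM v).hasFDerivAt) (hasFDerivAt_id p))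
    exact this.congr_fderiv (add_comm _ _)
  have := h1.const_add v
  simpa [tExt] using this

/-! ### Differentiating along tangent directions of `H^n` -/

lemma tangent_deriv_zero {g : E n → ℝ} {p : E n} (hp : p ∈ H n)
    (hg : DifferentiableAt ℝ g p) (hg0 : ∀ q ∈ H n, g q = 0)
    {w : E n} (hw : mink w p = 0) : fderiv ℝ g p w = 0 := by
  set m := mink w w with hm
  set s : ℝ → ℝ := fun t => (Real.sqrt (1 - m * t ^ 2))⁻¹ with hs
  set c : ℝ → E n := fun t => s t • (p + t • w) with hc
  have hs0 : s 0 = 1 := by simp [hs]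
  have hc0 : c 0 = p := by simp [hc, hs0]
  have hcont : Continuous fun t : ℝ => 1 - m * t ^ 2 := by continuity
  have htend : Filter.Tendsto (fun t : ℝ => 1 - m * t ^ 2) (nhds 0) (nhds 1) := by
    simpa using hcont.tendsto 0
  have hev : ∀ᶠ t in nhds (0:ℝ), 0 < 1 - m * t ^ 2 :=
    htend.eventually (eventually_gt_nhds one_pos)
  have hder_s : HasDerivAt s 0 0 := by
    have hu : HasDerivAt (fun t : ℝ => 1 - m * t ^ 2) 0 0 := by
      have h1 : HasDerivAt (fun t : ℝ => m * t ^ 2) (m * (2 * 0 ^ 1)) 0 :=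
        ((hasDerivAt_pow 2 (0:ℝ))).const_mul m
      have h2 := (hasDerivAt_const (0:ℝ) (1:ℝ)).sub h1
      exact h2.congr_deriv (by simp)
    have hsq := hu.sqrt (by norm_num)
    have := hsq.inv (by norm_num)
    exact this.congr_deriv (by simp)
  have hder_c : HasDerivAt c w 0 := by
    have hlin : HasDerivAt (fun t : ℝ => p + t • w) w 0 := by
      have := ((hasDerivAt_id (0:ℝ)).smul_const w).const_add p
      simpa using this
    have := hder_s.smul hlin
    simp only [hs0, one_smul, zero_smul, smul_zero] at this
    exact this.congr_deriv (by simp)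
  have hconts : ContinuousAt s 0 := by
    have h1 : ContinuousAt (fun t : ℝ => Real.sqrt (1 - m * t ^ 2)) 0 :=
      (Real.continuous_sqrt.comp hcont).continuousAt
    exact h1.inv₀ (by norm_num)
  have hcont_c0 : Filter.Tendsto (fun t => c t 0) (nhds 0) (nhds (p 0)) := by
    have : ContinuousAt (fun t => s t * (p 0 + t * w 0)) 0 :=
      hconts.mul (by fun_prop)
    have := this.tendsto
    have h2 : s 0 * (p 0 + 0 * w 0) = p 0 := by simp [hs0]
    rw [h2] at this
    convert this using 2 with t
    simp [hc]
    ring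
  have hpos : ∀ᶠ t in nhds (0:ℝ), 0 < c t 0 :=
    hcont_c0.eventually (eventually_gt_nhds hp.2)
  have hmem : ∀ᶠ t in nhds (0:ℝ), c t ∈ H n := by
    filter_upwards [hev, hpos] with t h1 h2
    refine ⟨?_, h2⟩
    have hpw : mink p w = 0 := by rw [mink_symm]; exact hw
    have hexp : mink (p + t • w) (p + t • w) = -(1 - m * t ^ 2) := by
      simp only [mink_add_left, mink_add_right, mink_smul_left, mink_smul_right, hp.1, hw, hpw]
      rw [hm]; ring
    have hsq : s t ^ 2 = (1 - m * t ^ 2)⁻¹ := by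
      simp only [hs, inv_pow, Real.sq_sqrt h1.le]
    calc mink (c t) (c t) = s t ^ 2 * mink (p + t • w) (p + t • w) := by
          simp only [hc, mink_smul_left, mink_smul_right]; ring
      _ = -1 := by rw [hexp, hsq]; field_simp
  have hgc : HasDerivAt (fun t => g (c t)) (fderiv ℝ g p w) 0 := by
    have hfd : HasFDerivAt g (fderiv ℝ g p) (c 0) := by rw [hc0]; exact hg.hasFDerivAt
    exact hfd.comp_hasDerivAt 0 hder_c
  have heq : (fun t => g (c t)) =ᶠ[nhds (0:ℝ)] fun _ => 0 := by
    filter_upwards [hmem] with t ht using hg0 _ ht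
  have hgc0 : HasDerivAt (fun t => g (c t)) 0 0 :=
    (hasDerivAt_const (0:ℝ) (0:ℝ)).congr_of_eventuallyEq heq
  exact hgc.unique hgc0

/-! ### Positive definiteness on tangent spaces and orthogonal directions -/

lemma mink_pos_of_tangent {p w : E n} (hp : p ∈ H n) (hw : mink w p = 0)
    (hwne : w ≠ 0) : 0 < mink w w := by
  set A : ℝ := ∑ j : Fin n, (w j.succ) ^ 2 with hA
  set B : ℝ := ∑ j : Fin n, (p j.succ) ^ 2 with hB
  set C : ℝ := ∑ j : Fin n, (w j.succ) * (p j.succ) with hC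
  have hAnn : 0 ≤ A := Finset.sum_nonneg fun j _ => sq_nonneg _
  have hsum : ∀ u v : E n, mink u v = (∑ j : Fin n, u j.succ * v j.succ) - u 0 * v 0 := by
    intro u v
    unfold mink
    rw [Fin.sum_univ_succ]
    ring
  have hCeq : C = w 0 * p 0 := by
    have := hw
    rw [hsum] at this
    rw [hC]; linarith
  have hBnn : 0 ≤ B := Finset.sum_nonneg fun j _ => sq_nonneg _
  have hBeq : B = p 0 ^ 2 - 1 := by
    have := hp.1
    rw [hsum] at this
    simp only [← pow_two] at this
    rw [hB]; linarith
  have hcs : C ^ 2 ≤ A * B := by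
    rw [hA, hB, hC]
    exact Finset.sum_mul_sq_le_sq_mul_sq _ _ _
  have hww : mink w w = A - w 0 ^ 2 := by
    rw [hsum, hA]
    simp only [← pow_two]
  rw [hww]
  by_cases hw0 : w 0 = 0
  · have : A ≠ 0 := by
      intro h0
      apply hwne
      have hz : ∀ j : Fin n, w j.succ = 0 := by
        intro j
        have := (Finset.sum_eq_zero_iff_of_nonneg (fun j _ => sq_nonneg (w j.succ))).1
          (by rw [← hA]; exact h0) j (Finset.mem_univ j)
        exact pow_eq_zero_iff (two_ne_zero) |>.1 this
      funext i
      refine Fin.cases ?_ ?_ i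
      · exact hw0
      · exact hz
    have h := lt_of_le_of_ne hAnn (Ne.symm this)
    rw [hw0]; nlinarith
  · have hp0 : 0 < p 0 := hp.2
    have h1 : w 0 ^ 2 * p 0 ^ 2 ≤ A * (p 0 ^ 2 - 1) := by
      rw [hCeq, hBeq] at hcs
      nlinarith [hcs]
    have hq1 : 0 ≤ p 0 ^ 2 - 1 := by rw [← hBeq]; exact hBnn
    nlinarith [h1, hq1, sq_pos_of_ne_zero hw0, mul_pos hp0 hp0, mul_nonneg hq1 hAnn]

lemma exists_ortho_unit (hn : 3 ≤ n) {p : E n} (hp : p ∈ H n) (u₁ u₂ : E n) :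
    ∃ w : E n, mink w p = 0 ∧ mink w u₁ = 0 ∧ mink w u₂ = 0 ∧ mink w w = 1 := by
  let L : E n →ₗ[ℝ] (Fin 3 → ℝ) :=
    { toFun := fun w => ![mink w p, mink w u₁, mink w u₂]
      map_add' := by
        intro a b; funext i
        fin_cases i <;> simp [mink_add_left]
      map_smul' := by
        intro c a; funext i
        fin_cases i <;> simp [mink_smul_left] }
  have hker : ∃ w : E n, w ≠ 0 ∧ L w = 0 := by
    by_contra hcon
    push_neg at hcon
    have hinj : Function.Injective L := by
      rw [← LinearMap.ker_eq_bot, LinearMap.ker_eq_bot']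
      intro w hw
      by_contra hne
      exact (hcon w hne) hw
    have := LinearMap.finrank_le_finrank_of_injective hinj
    rw [Module.finrank_fintype_fun_eq_card, Module.finrank_fintype_fun_eq_card] at this
    simp [Fintype.card_fin] at this
    omega
  obtain ⟨w', hw'ne, hw'L⟩ := hker
  have h0 : mink w' p = 0 := by
    have := congrFun hw'L 0; simpa [L] using this
  have h1 : mink w' u₁ = 0 := by
    have := congrFun hw'L 1; simpa [L] using this
  have h2 : mink w' u₂ = 0 := by
    have := congrFun hw'L 2; simpa [L] using this
  have hpos := mink_pos_of_tangent hp h0 hw'ne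
  refine ⟨(Real.sqrt (mink w' w'))⁻¹ • w', ?_, ?_, ?_, ?_⟩
  · rw [mink_smul_left, h0]; ring
  · rw [mink_smul_left, h1]; ring
  · rw [mink_smul_left, h2]; ring
  · rw [mink_smul_left, mink_smul_right]
    have hs : Real.sqrt (mink w' w') * Real.sqrt (mink w' w') = mink w' w' :=
      Real.mul_self_sqrt hpos.le
    have hne : Real.sqrt (mink w' w') ≠ 0 := (Real.sqrt_pos.2 hpos).ne'
    field_simp
    rw [Real.sq_sqrt hpos.le]


/-- Let `V` be an anti-torqued vector field on hyperbolic space `H^n`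
(`n ≥ 3`) with conformal scalar `f` and dual 1-form `ν = ⟨·, V⟩`.  Then `dν = 0`
and `∇f = (1 − f²) V`. -/
theorem anti_torqued_on_hyperbolic_dν_and_gradient (hn : 3 ≤ n)
    (V : E n → E n) (f : E n → ℝ)
    (hV : ContDiff ℝ (⊤ : ℕ∞) V) (hf : ContDiff ℝ (⊤ : ℕ∞) f)
    (hVtan : ∀ p ∈ H n, mink (V p) p = 0)           -- V is tangent to H^n
    (hVnz : ∀ p ∈ H n, 0 < mink (V p) (V p))        -- V is nowhere zero
    -- ∇_X V = f (X − ν(X) V) for all smooth tangent vector fields X: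
    (hanti : ∀ X : E n → E n, ContDiff ℝ (⊤ : ℕ∞) X → (∀ p ∈ H n, mink (X p) p = 0) →
        ∀ p ∈ H n,
          hypbConn X V p = f p • (X p - mink (X p) (V p) • V p)) :
    -- dν = 0 : for all smooth tangent vector fields X, Y,
    -- X(ν(Y)) − Y(ν(X)) − ν([X,Y]) = 0 on H^n
    (∀ X Y : E n → E n, ContDiff ℝ (⊤ : ℕ∞) X → ContDiff ℝ (⊤ : ℕ∞) Y →
        (∀ p ∈ H n, mink (X p) p = 0) → (∀ p ∈ H n, mink (Y p) p = 0) →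
        ∀ p ∈ H n,
          fderiv ℝ (fun q => mink (V q) (Y q)) p (X p)
            - fderiv ℝ (fun q => mink (V q) (X q)) p (Y p)
            - mink (V p) (fderiv ℝ Y p (X p) - fderiv ℝ X p (Y p)) = 0) ∧
    -- ∇f = (1 − f²) V : for all tangent vectors v at points of H^n,
    (∀ p ∈ H n, ∀ v : E n, mink v p = 0 →
        fderiv ℝ f p v = (1 - f p ^ 2) * mink (V p) v) := by
  have hVd : Differentiable ℝ V := hV.differentiable (by simp)
  have hfd : Differentiable ℝ f := hf.differentiable (by simp)
  have hDVd : Differentiable ℝ (fderiv ℝ V) := by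
    have h' : ContDiff ℝ ((⊤:ℕ∞) : WithTop ℕ∞) V := hV.of_le (by simp)
    exact ((contDiff_infty_iff_fderiv.mp h').2).differentiable (by simp)
  -- the pointwise anti-torqued formula for arbitrary tangent vectors
  have star : ∀ p ∈ H n, ∀ v : E n, mink v p = 0 →
      fderiv ℝ V p v = mink v (V p) • p + f p • (v - mink v (V p) • V p) := by
    intro p hp v hv
    have h := hanti (tExt v) (tExt_contDiff v) (tExt_tangent v) p hp
    rw [hypbConn] at h
    rw [tExt_apply_self v p hv] at h
    have := h
    linear_combination (norm := module) this
  constructor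
  · -- dν = 0
    intro X Y hX hY hXtan hYtan p hp
    have hdY : HasFDerivAt (fun q => mink (V q) (Y q)) _ p :=
      hasFDerivAt_mink (hVd p).hasFDerivAt (hY.differentiable (by simp) p).hasFDerivAt
    have hdX : HasFDerivAt (fun q => mink (V q) (X q)) _ p :=
      hasFDerivAt_mink (hVd p).hasFDerivAt (hX.differentiable (by simp) p).hasFDerivAt
    rw [hdY.fderiv, hdX.fderiv]
    simp only [ContinuousLinearMap.add_apply, ContinuousLinearMap.coe_comp', Function.comp_apply,
      ContinuousLinearMap.flip_apply, ContinuousLinearMap.comp_apply, minkCLM_apply]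
    rw [star p hp (X p) (hXtan p hp), star p hp (Y p) (hYtan p hp)]
    rw [mink_sub_right]
    simp only [mink_add_left, mink_smul_left, mink_sub_left, mink_smul_left]
    have h1 : mink p (Y p) = 0 := by rw [mink_symm]; exact hYtan p hp
    have h2 : mink p (X p) = 0 := by rw [mink_symm]; exact hXtan p hp
    rw [h1, h2]
    rw [mink_symm (X p) (Y p), mink_symm (V p) (X p), mink_symm (V p) (Y p)]
    ring
  · -- ∇f = (1 - f²) V
    intro p hp v hv
    obtain ⟨w, hwp, hwV, hwv, hww⟩ := exists_ortho_unit hn hp (V p) v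
    -- notation
    set DV := fderiv ℝ V with hDV
    set D2 := fderiv ℝ (fderiv ℝ V) p with hD2
    set Df := fderiv ℝ f p with hDf
    -- the vector field F a vanishing on H
    have hF0 : ∀ a : E n, ∀ q ∈ H n,
        ((fderiv ℝ V q (tExt a q) - mink (tExt a q) (V q) • q)
          - f q • (tExt a q - mink (tExt a q) (V q) • V q)) = 0 := by
      intro a q hq
      have h := hanti (tExt a) (tExt_contDiff a) (tExt_tangent a) q hq
      rw [hypbConn] at h
      rw [h]
      abel
    -- derivative machinery for the paired scalar function
    have key : ∀ a : E n, ∀ u d : E n, mink d p = 0 →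
        mink ((D2 d) (tExt a p) + (DV p) ((mink a d) • p + (mink a p) • d)
          - ((mink (tExt a p) (DV p d) + mink ((mink a d) • p + (mink a p) • d) (V p)) • p
              + mink (tExt a p) (V p) • d)
          - ((Df d) • (tExt a p - mink (tExt a p) (V p) • V p)
              + f p • (((mink a d) • p + (mink a p) • d)
                  - ((mink (tExt a p) (DV p d)
                      + mink ((mink a d) • p + (mink a p) • d) (V p)) • V p
                     + mink (tExt a p) (V p) • DV p d)))) u = 0 := by
      intro a u d hd
      have hXd : HasFDerivAt (tExt a)
          (((minkCLM a).smulRight p) + (mink a p) • (ContinuousLinearMap.id ℝ (E n))) p :=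
        hasFDerivAt_tExt a p
      have hVp : HasFDerivAt V (DV p) p := (hVd p).hasFDerivAt
      have hDVp : HasFDerivAt DV D2 p := (hDVd p).hasFDerivAt
      have hfp : HasFDerivAt f Df p := (hfd p).hasFDerivAt
      have hA : HasFDerivAt (fun q => fderiv ℝ V q (tExt a q)) _ p := hDVp.clm_apply hXd
      have hs : HasFDerivAt (fun q => mink (tExt a q) (V q)) _ p := hasFDerivAt_mink hXd hVp
      have ht2 : HasFDerivAt (fun q => mink (tExt a q) (V q) • q) _ p :=
        hs.smul (hasFDerivAt_id p)
      have ht3 : HasFDerivAt (fun q => tExt a q - mink (tExt a q) (V q) • V q) _ p :=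
        hXd.sub (hs.smul hVp)
      have hFa : HasFDerivAt (fun q =>
          (fderiv ℝ V q (tExt a q) - mink (tExt a q) (V q) • q)
            - f q • (tExt a q - mink (tExt a q) (V q) • V q)) _ p :=
        (hA.sub ht2).sub (hfp.smul ht3)
      have hG : HasFDerivAt (fun q => mink
          ((fderiv ℝ V q (tExt a q) - mink (tExt a q) (V q) • q)
            - f q • (tExt a q - mink (tExt a q) (V q) • V q)) u) _ p :=
        hasFDerivAt_mink hFa (hasFDerivAt_const u p)
      have hz := tangent_deriv_zero hp hG.differentiableAt
        (fun q hq => by rw [hF0 a q hq]; simp) hd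
      rw [hG.fderiv] at hz
      simp only [ContinuousLinearMap.add_apply, ContinuousLinearMap.coe_comp',
        Function.comp_apply, ContinuousLinearMap.flip_apply, ContinuousLinearMap.comp_apply,
        ContinuousLinearMap.coe_sub', Pi.sub_apply, ContinuousLinearMap.smulRight_apply,
        ContinuousLinearMap.coe_smul', Pi.smul_apply, ContinuousLinearMap.coe_id', id_eq,
        ContinuousLinearMap.zero_apply, minkCLM_apply, smul_eq_mul,
        mink_zero_right, add_zero, zero_add] at hz
      convert hz using 2
      module
    -- orthogonality facts
    have hvw : mink v w = 0 := by rw [mink_symm]; exact hwv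
    have hpw : mink p w = 0 := by rw [mink_symm]; exact hwp
    have hVw : mink (V p) w = 0 := by rw [mink_symm]; exact hwV
    have hVpp : mink (V p) p = 0 := hVtan p hp
    -- the derivative of V at p in the directions w and v
    have hstarw : DV p w = f p • w := by
      rw [hDV, star p hp w hwp, hwV]; module
    have hstarv : DV p v = mink v (V p) • p + f p • (v - mink v (V p) • V p) := by
      rw [hDV]; exact star p hp v hv
    -- equation E1
    have hk1 := key v w w hwp
    rw [tExt_apply_self v p hv, hstarw] at hk1
    simp only [hv, hvw, hwv, hww, hpw, hVw, hVpp, mink_smul_left, mink_smul_right,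
      mink_sub_left, mink_add_left, mink_sub_right, mink_add_right, zero_smul, smul_zero,
      add_zero, zero_add, map_zero, mul_zero, zero_mul, mul_one, one_mul, sub_zero,
      zero_sub, mink_neg_left, mink_neg_right, neg_neg, mul_neg, neg_mul,
      mink_zero_left, mink_zero_right] at hk1
    -- equation E2
    have hk2 := key w w v hv
    rw [tExt_apply_self w p hwp, hstarv] at hk2
    simp only [hv, hvw, hwv, hww, hpw, hVw, hVpp, hwp, hwV, mink_smul_left, mink_smul_right,
      mink_sub_left, mink_add_left, mink_sub_right, mink_add_right, zero_smul, smul_zero,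
      add_zero, zero_add, map_zero, mul_zero, zero_mul, mul_one, one_mul, sub_zero,
      zero_sub, mink_neg_left, mink_neg_right, neg_neg, mul_neg, neg_mul,
      mink_zero_left, mink_zero_right] at hk2
    -- symmetry of the second derivative
    have hsym : D2 v w = D2 w v :=
      second_derivative_symmetric (fun y => (hVd y).hasFDerivAt) ((hDVd p).hasFDerivAt) v w
    show Df v = (1 - f p ^ 2) * mink (V p) v
    rw [mink_symm (V p) v]
    have hE2 : Df v = mink (D2 v w) w := by linear_combination -hk2
    have hE1 : mink (D2 w v) w = (1 - f p ^ 2) * mink v (V p) := by linear_combination hk1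
    rw [hE2, hsym, hE1]


end HyperboloidModel
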